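/- For every ε > 0 and every uniform fractional matching x in a graph G=(V,E) on n vertices (i.e., x_e = λ for all e ∈ supp(x), for some λ > 0), there exists a (4ε, ε)-split of x: vectors z⁽¹⁾, …, z⁽ᵏ⁾ ∈ ℝ_{≥0}^E, each a (4ε, ε)-coarsening of x, with pairwise disjoint supports contained in supp(x), such that Σ_i |supp(z⁽ⁱ⁾)| ≥ |supp(x)|/2. -/

import Mathlib

/-!
If `λ ≥ ε`, then `x` is a coarsening of itself. Otherwise choose `k` with `2ᵏλ ∈ [ε, 2ε)` and
split `supp x` by `k` rounds of balanced halving into parts `P`, each carrying a `2⁻ᵏ` share of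
`|supp x|` and of every vertex degree up to an error below `2ᵏ`; the vectors `2ᵏλ · 1_P` are then
`(4ε, ε)`-coarsenings of `x`, and together they cover `supp x`.

A balanced halving (sizes differ by at most 1, degrees by at most 2) comes from colouring a
longest trail alternately, which leaves only its two ends unbalanced, and halving the remaining
edges recursively: none of them meets an end of the trail.
-/

open Finset

variable {V : Type*} [Fintype V] [DecidableEq V]

/-- The fractional degree `x(v) := Σ_{e ∋ v} x_e` of a vertex `v` under `x`. -/
noncomputable def fracDeg (x : Sym2 V → ℝ) (v : V) : ℝ :=
  ∑ e : Sym2 V, if v ∈ e then x e else 0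

/-- `‖x‖ := Σ_e x_e`. -/
noncomputable def vnorm (x : Sym2 V → ℝ) : ℝ :=
  ∑ e : Sym2 V, x e

/-- `d^ε_V(x,y) := Σ_{v∈V} max(|x(v) − y(v)| − ε, 0)`. -/
noncomputable def dV (ε : ℝ) (x y : Sym2 V → ℝ) : ℝ :=
  ∑ v : V, max (|fracDeg x v - fracDeg y v| - ε) 0

/-- `x'` is an `(ε,δ)`-coarsening of `x`: `x' ∈ ℝ_{≥0}^E` with
(C0) `supp(x') ⊆ supp(x)`; (C1) `|‖x‖ − ‖x'‖| ≤ ε‖x‖ + ε`; (C2) `d^ε_V(x,x') ≤ ε‖x‖ + ε`;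
(C3) `x'_e ∈ {0} ∪ [δ, 2δ)` whenever `x_e < δ`, and `x'_e = x_e` whenever `x_e ≥ δ`. -/
def IsCoarsening (ε δ : ℝ) (x x' : Sym2 V → ℝ) : Prop :=
  (∀ e, 0 ≤ x' e) ∧
  (∀ e, x' e ≠ 0 → x e ≠ 0) ∧
  |vnorm x - vnorm x'| ≤ ε * vnorm x + ε ∧
  dV ε x x' ≤ ε * vnorm x + ε ∧
  (∀ e, x e < δ → x' e = 0 ∨ (δ ≤ x' e ∧ x' e < 2 * δ)) ∧
  (∀ e, δ ≤ x e → x' e = x e)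

/-- A coarsening is bounded if additionally (C4) `x'(v) ≤ x(v) + ε` for every vertex `v`. -/
def IsBoundedCoarsening (ε δ : ℝ) (x x' : Sym2 V → ℝ) : Prop :=
  IsCoarsening ε δ x x' ∧ ∀ v : V, fracDeg x' v ≤ fracDeg x v + ε


section EdgeDegree

variable {α : Type*} [DecidableEq α]

def edgeDegree (E : Finset (Sym2 α)) (v : α) : ℕ := #{e ∈ E | v ∈ e}

lemma edgeDegree_union {A B : Finset (Sym2 α)} (h : Disjoint A B) (v : α) :
    edgeDegree (A ∪ B) v = edgeDegree A v + edgeDegree B v := by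
  rw [edgeDegree, filter_union, card_union_of_disjoint (disjoint_filter_filter h)]
  rfl

lemma edgeDegree_eq_zero {E : Finset (Sym2 α)} {v : α} (h : ∀ e ∈ E, v ∉ e) :
    edgeDegree E v = 0 := by
  simpa [edgeDegree, filter_eq_empty_iff] using h

lemma edgeDegree_eq_sum (E : Finset (Sym2 α)) (v : α) :
    (edgeDegree E v : ℤ) = ∑ e ∈ E, if v ∈ e then 1 else 0 := by
  simp [edgeDegree, sum_boole]

def IsBalancedHalving (E E₁ E₂ : Finset (Sym2 α)) : Prop :=
  Disjoint E₁ E₂ ∧ E₁ ∪ E₂ = E ∧ |(#E₁ : ℤ) - #E₂| ≤ 1 ∧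
    ∀ v, |(edgeDegree E₁ v : ℤ) - edgeDegree E₂ v| ≤ 2

lemma IsBalancedHalving.symm {E E₁ E₂ : Finset (Sym2 α)} (h : IsBalancedHalving E E₁ E₂) :
    IsBalancedHalving E E₂ E₁ := by
  obtain ⟨hdisj, hunion, hcard, hdeg⟩ := h
  exact ⟨hdisj.symm, union_comm E₂ E₁ ▸ hunion, abs_sub_comm (#E₁ : ℤ) #E₂ ▸ hcard,
    fun v => abs_sub_comm (edgeDegree E₁ v : ℤ) _ ▸ hdeg v⟩

lemma abs_add_le_one_of_mul_nonpos {p q : ℤ} (hp : |p| ≤ 1) (hq : |q| ≤ 1) (hpq : p * q ≤ 0) :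
    |p + q| ≤ 1 := by
  rw [abs_le] at *
  rcases (by omega : p = -1 ∨ p = 0 ∨ p = 1) with rfl | rfl | rfl <;> omega

lemma IsBalancedHalving.union {F L F₁ F₂ A B : Finset (Sym2 α)} (hF : IsBalancedHalving F F₁ F₂)
    (hL : IsBalancedHalving L A B) (hFL : Disjoint F L)
    (hsep : ∀ v, edgeDegree F v = 0 ∨ edgeDegree A v = edgeDegree B v)
    (hcard : ((#F₁ : ℤ) - #F₂) * ((#A : ℤ) - #B) ≤ 0) :
    IsBalancedHalving (F ∪ L) (F₁ ∪ A) (F₂ ∪ B) := by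
  obtain ⟨hF₁₂, rfl, hFcard, hFdeg⟩ := hF
  obtain ⟨hAB, rfl, hLcard, hLdeg⟩ := hL
  simp only [disjoint_union_left, disjoint_union_right] at hFL
  refine ⟨?_, union_union_union_comm .., ?_, fun v => ?_⟩
  · simp only [disjoint_union_left, disjoint_union_right]
    exact ⟨⟨hF₁₂, hFL.1.2.symm⟩, hFL.2.1, hAB⟩
  · rw [card_union_of_disjoint hFL.1.1, card_union_of_disjoint hFL.2.2]
    push_cast
    convert abs_add_le_one_of_mul_nonpos hFcard hLcard hcard using 2
    ring
  · rw [edgeDegree_union hFL.1.1, edgeDegree_union hFL.2.2]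
    push_cast
    rcases hsep v with h | h
    · rw [edgeDegree_union hF₁₂, Nat.add_eq_zero_iff] at h
      simpa [h.1, h.2] using hLdeg v
    · simpa [h] using hFdeg v

lemma IsBalancedHalving.exists_union {F L F₁ F₂ A B : Finset (Sym2 α)}
    (hF : IsBalancedHalving F F₁ F₂) (hL : IsBalancedHalving L A B) (hFL : Disjoint F L)
    (hsep : ∀ v, edgeDegree F v = 0 ∨ edgeDegree A v = edgeDegree B v) :
    ∃ E₁ E₂, IsBalancedHalving (F ∪ L) E₁ E₂ := by
  rcases le_total (((#F₁ : ℤ) - #F₂) * ((#A : ℤ) - #B)) 0 with h | h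
  · exact ⟨_, _, hF.union hL hFL hsep h⟩
  · refine ⟨_, _, hF.union hL.symm hFL (fun v => (hsep v).imp_right Eq.symm) ?_⟩
    linarith [mul_neg ((#F₁ : ℤ) - #F₂) ((#A : ℤ) - #B), neg_sub (#A : ℤ) #B]

end EdgeDegree

section AlternateHalves

variable {β : Type*} [DecidableEq β]

/-- The elements of a list at even and at odd positions. -/
def alternateHalves : List β → Finset β × Finset β
  | [] => (∅, ∅)
  | a :: l => (insert a (alternateHalves l).2, (alternateHalves l).1)

lemma alternateHalves_union :
    ∀ l : List β, (alternateHalves l).1 ∪ (alternateHalves l).2 = l.toFinset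
  | [] => rfl
  | a :: l => by
    rw [alternateHalves, List.toFinset_cons, ← alternateHalves_union l, insert_union, union_comm]

lemma disjoint_alternateHalves :
    ∀ {l : List β}, l.Nodup → Disjoint (alternateHalves l).1 (alternateHalves l).2
  | [], _ => disjoint_empty_left _
  | a :: l, h => by
    rw [List.nodup_cons, ← List.mem_toFinset, ← alternateHalves_union] at h
    simp only [alternateHalves]
    exact disjoint_insert_left.2 ⟨fun ha => h.1 (mem_union_left _ ha),
      (disjoint_alternateHalves h.2).symm⟩

lemma sum_alternateHalves_sub {M : Type*} [AddCommGroup M] (f : β → M) :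
    ∀ {l : List β}, l.Nodup →
      ∑ a ∈ (alternateHalves l).1, f a - ∑ a ∈ (alternateHalves l).2, f a =
        (l.map f).alternatingSum
  | [], _ => by simp [alternateHalves]
  | a :: l, h => by
    rw [List.nodup_cons, ← List.mem_toFinset, ← alternateHalves_union] at h
    have ha : a ∉ (alternateHalves l).2 := fun ha => h.1 (mem_union_right _ ha)
    rw [alternateHalves, sum_insert ha, List.map_cons, List.alternatingSum_cons,
      ← sum_alternateHalves_sub f h.2]
    abel

lemma card_alternateHalves :
    ∀ {l : List β}, l.Nodup →
      #(alternateHalves l).2 ≤ #(alternateHalves l).1 ∧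
        #(alternateHalves l).1 ≤ #(alternateHalves l).2 + 1
  | [], _ => by simp [alternateHalves]
  | a :: l, h => by
    rw [List.nodup_cons, ← List.mem_toFinset, ← alternateHalves_union] at h
    have ha : a ∉ (alternateHalves l).2 := fun ha => h.1 (mem_union_right _ ha)
    have := card_alternateHalves h.2
    simp only [alternateHalves]
    rw [card_insert_of_notMem ha]
    omega

end AlternateHalves

namespace SimpleGraph

variable {α : Type*} {G : SimpleGraph α}

namespace Walk

variable [DecidableEq α]

lemma alternatingSum_map_edges_indicator (x : α) : ∀ {u v : α} (w : G.Walk u v),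
    (w.edges.map fun e => if x ∈ e then (1 : ℤ) else 0).alternatingSum =
      (if x = u then 1 else 0) - (-1) ^ w.length * (if x = v then 1 else 0)
  | _, _, nil => by simp
  | u, _, cons (v := v) h p => by
    have hmem : (if x ∈ s(u, v) then (1 : ℤ) else 0) =
        (if x = u then 1 else 0) + (if x = v then 1 else 0) := by
      have := h.ne
      by_cases hu : x = u <;> by_cases hv : x = v <;> simp_all
    rw [edges_cons, List.map_cons, List.alternatingSum_cons,
      alternatingSum_map_edges_indicator x p, hmem, length_cons, pow_succ]
    ring

lemma IsTrail.edgeDegree_alternateHalves_sub {u v : α} {w : G.Walk u v} (hw : w.IsTrail) (x : α) :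
    (edgeDegree (alternateHalves w.edges).1 x : ℤ) - edgeDegree (alternateHalves w.edges).2 x =
      (if x = u then 1 else 0) - (-1) ^ w.length * (if x = v then 1 else 0) := by
  rw [edgeDegree_eq_sum, edgeDegree_eq_sum, sum_alternateHalves_sub _ hw.edges_nodup,
    alternatingSum_map_edges_indicator]

lemma IsTrail.isBalancedHalving_alternateHalves {u v : α} {w : G.Walk u v} (hw : w.IsTrail) :
    IsBalancedHalving w.edges.toFinset (alternateHalves w.edges).1 (alternateHalves w.edges).2 := by
  have hcard := card_alternateHalves hw.edges_nodup
  refine ⟨disjoint_alternateHalves hw.edges_nodup, alternateHalves_union _, ?_, fun x => ?_⟩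
  · rw [abs_le]
    omega
  · rw [hw.edgeDegree_alternateHalves_sub]
    refine (abs_sub _ _).trans ?_
    rw [abs_mul, abs_neg_one_pow, one_mul]
    have h01 : ∀ p : Prop, [Decidable p] → |(if p then (1 : ℤ) else 0)| ≤ 1 := by
      intro p _
      split_ifs <;> simp
    linarith [h01 (x = u), h01 (x = v)]

lemma IsTrail.edgeDegree_alternateHalves_eq {u v x : α} {w : G.Walk u v} (hw : w.IsTrail)
    (hu : x ≠ u) (hv : x ≠ v) :
    edgeDegree (alternateHalves w.edges).1 x = edgeDegree (alternateHalves w.edges).2 x := by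
  have := hw.edgeDegree_alternateHalves_sub x
  simp only [hu, hv, if_false, mul_zero, sub_zero] at this
  omega

end Walk

/-- Take a longest trail: it cannot be prolonged at either end. -/
lemma exists_isTrail_forall_notMem_edges [Finite G.edgeSet] (hG : G.edgeSet.Nonempty) :
    ∃ (u v : α) (w : G.Walk u v), w.IsTrail ∧ w.edges ≠ [] ∧
      ∀ e ∈ G.edgeSet, e ∉ w.edges → u ∉ e ∧ v ∉ e := by
  obtain ⟨e₀, he₀⟩ := hG
  induction e₀ using Sym2.ind with | _ a b =>
  have : Nonempty α := ⟨a⟩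
  obtain ⟨u, v, w, hw, hmax⟩ := Walk.exists_isTrail_forall_isTrail_length_le_length G
  have hstart : ∀ {u' v' : α} (w' : G.Walk u' v'), w'.IsTrail → w'.length = w.length →
      ∀ e ∈ G.edgeSet, e ∉ w'.edges → u' ∉ e := by
    intro u' v' w' hw' hlen e he hew hu
    have hadj : G.Adj u' (Sym2.Mem.other hu) := by rwa [← mem_edgeSet, Sym2.other_spec hu]
    have hcons := hmax _ _ (Walk.cons hadj.symm w')
      (hw'.cons hadj.symm (by rwa [Sym2.eq_swap, Sym2.other_spec hu]))
    rw [Walk.length_cons] at hcons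
    omega
  refine ⟨u, v, w, hw, ?_, fun e he hew => ⟨hstart w hw rfl e he hew, ?_⟩⟩
  · have hadj : G.Adj a b := he₀
    have := hmax _ _ (Walk.cons hadj Walk.nil) (Walk.IsTrail.nil.cons hadj (by simp))
    rw [← List.length_pos_iff, Walk.length_edges]
    simpa [Nat.one_le_iff_ne_zero, Nat.pos_iff_ne_zero] using this
  · exact hstart w.reverse hw.reverse (Walk.length_reverse w) e he (by simpa using hew)

end SimpleGraph

section Halving

variable {α : Type*} [DecidableEq α]

open SimpleGraph in
theorem exists_isBalancedHalving (E : Finset (Sym2 α)) (hE : ∀ e ∈ E, ¬e.IsDiag) :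
    ∃ E₁ E₂, IsBalancedHalving E E₁ E₂ := by
  induction E using Finset.strongInduction with
  | H E ih =>
  rcases E.eq_empty_or_nonempty with rfl | hne
  · exact ⟨∅, ∅, by simp [IsBalancedHalving, edgeDegree]⟩
  have hGE : (fromEdgeSet (E : Set (Sym2 α))).edgeSet = E := by
    rw [edgeSet_fromEdgeSet, sdiff_eq_left, Set.disjoint_left]
    exact fun e he => hE e he
  obtain ⟨u, v, w, hw, hne', hmax⟩ :=
    (fromEdgeSet (E : Set (Sym2 α))).exists_isTrail_forall_notMem_edges (by rwa [hGE, coe_nonempty])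
  set L := w.edges.toFinset
  have hLE : L ⊆ E := fun e he => by
    simpa [hGE] using w.edges_subset_edgeSet (List.mem_toFinset.1 he)
  obtain ⟨F₁, F₂, hF⟩ := ih (E \ L) (sdiff_ssubset hLE (List.toFinset_nonempty_iff _ |>.2 hne'))
    fun e he => hE e (mem_sdiff.1 he).1
  rw [← sdiff_union_of_subset hLE]
  refine hF.exists_union hw.isBalancedHalving_alternateHalves sdiff_disjoint fun x => ?_
  by_cases hx : x = u ∨ x = v
  · refine Or.inl (edgeDegree_eq_zero fun e he hxe => ?_)
    obtain ⟨heE, heL⟩ := mem_sdiff.1 he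
    have := hmax e (by rwa [hGE]) (fun h => heL (List.mem_toFinset.2 h))
    rcases hx with rfl | rfl
    exacts [this.1 hxe, this.2 hxe]
  · push Not at hx
    exact Or.inr (hw.edgeDegree_alternateHalves_eq hx.1 hx.2)

end Halving

section FairShare

open Function

variable {α : Type*} [DecidableEq α]

/-- `T` carries a `2⁻ᵏ` share of the size of `E` and of every vertex degree in `E`, up to the
errors accumulated by `k` successive balanced halvings. -/
def IsFairShare (k : ℕ) (E T : Finset (Sym2 α)) : Prop :=
  |2 ^ k * (#T : ℤ) - #E| ≤ 2 ^ k - 1 ∧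
    ∀ v, |2 ^ k * (edgeDegree T v : ℤ) - edgeDegree E v| ≤ 2 * (2 ^ k - 1)

lemma isFairShare_zero (E : Finset (Sym2 α)) : IsFairShare 0 E E := by
  simp [IsFairShare]

lemma abs_two_pow_succ_mul_sub_le {a b c r s : ℤ} (k : ℕ) (hab : |2 ^ k * a - b| ≤ r)
    (hbc : |2 * b - c| ≤ s) : |2 ^ (k + 1) * a - c| ≤ 2 * r + s := by
  rw [show 2 ^ (k + 1) * a - c = 2 * (2 ^ k * a - b) + (2 * b - c) by ring]
  exact (abs_add_le _ _).trans (by rw [abs_mul, abs_two]; linarith)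

lemma IsFairShare.of_isBalancedHalving {k : ℕ} {E E₁ E₂ T : Finset (Sym2 α)}
    (hT : IsFairShare k E₁ T) (hE : IsBalancedHalving E E₁ E₂) : IsFairShare (k + 1) E T := by
  obtain ⟨hdisj, rfl, hcard, hdeg⟩ := hE
  refine ⟨?_, fun v => ?_⟩
  · refine (abs_two_pow_succ_mul_sub_le k hT.1 (b := #E₁) (s := 1) ?_).trans_eq (by ring)
    rw [card_union_of_disjoint hdisj]
    convert hcard using 2
    push_cast
    ring
  · refine (abs_two_pow_succ_mul_sub_le k (hT.2 v) (b := edgeDegree E₁ v) (s := 2) ?_).trans_eq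
      (by ring)
    rw [edgeDegree_union hdisj]
    convert hdeg v using 2
    push_cast
    ring

lemma pairwise_disjoint_fin_append {β : Type*} {m n : ℕ} {P : Fin m → Finset β}
    {Q : Fin n → Finset β} (hP : Pairwise (Disjoint on P)) (hQ : Pairwise (Disjoint on Q))
    (hPQ : ∀ i j, Disjoint (P i) (Q j)) : Pairwise (Disjoint on Fin.append P Q) := by
  intro i j hij
  induction i using Fin.addCases <;> induction j using Fin.addCases <;>
    simp only [Function.onFun, Fin.append_left, Fin.append_right] at hij ⊢
  · exact hP fun h => hij (by rw [h])
  · exact hPQ _ _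
  · exact (hPQ _ _).symm
  · exact hQ fun h => hij (by rw [h])

theorem exists_partition_isFairShare (k : ℕ) (E : Finset (Sym2 α)) (hE : ∀ e ∈ E, ¬e.IsDiag) :
    ∃ (n : ℕ) (P : Fin n → Finset (Sym2 α)), (∀ i, P i ⊆ E) ∧ Pairwise (Disjoint on P) ∧
      ∑ i, #(P i) = #E ∧ ∀ i, IsFairShare k E (P i) := by
  induction k generalizing E with
  | zero =>
    exact ⟨1, fun _ => E, fun _ => Subset.rfl, fun i j hij => (hij (Subsingleton.elim i j)).elim,
      by simp, fun _ => isFairShare_zero E⟩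
  | succ k ih =>
    obtain ⟨E₁, E₂, hE₁₂⟩ := exists_isBalancedHalving E hE
    obtain ⟨hdisj, hunion, -, -⟩ := id hE₁₂
    have h₁ : E₁ ⊆ E := hunion ▸ subset_union_left
    have h₂ : E₂ ⊆ E := hunion ▸ subset_union_right
    obtain ⟨m, P, hPE, hPdisj, hPsum, hPfair⟩ := ih E₁ fun e he => hE e (h₁ he)
    obtain ⟨n, Q, hQE, hQdisj, hQsum, hQfair⟩ := ih E₂ fun e he => hE e (h₂ he)
    refine ⟨m + n, Fin.append P Q, ?_, pairwise_disjoint_fin_append hPdisj hQdisj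
      fun i j => disjoint_of_subset_left (hPE i) (disjoint_of_subset_right (hQE j) hdisj), ?_, ?_⟩
    · refine Fin.addCases (fun i => ?_) (fun j => ?_)
      · simpa using (hPE i).trans h₁
      · simpa using (hQE j).trans h₂
    · rw [Fin.sum_univ_add]
      simp only [Fin.append_left, Fin.append_right]
      rw [hPsum, hQsum, ← hunion, card_union_of_disjoint hdisj]
    · refine Fin.addCases (fun i => ?_) (fun j => ?_)
      · simpa using (hPfair i).of_isBalancedHalving hE₁₂
      · simpa using (hQfair j).of_isBalancedHalving hE₁₂.symm

end FairShare

lemma exists_two_pow_mul_mem_Ico {lam ε : ℝ} (hlam : 0 < lam) (hlamε : lam < 2 * ε) :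
    ∃ k : ℕ, 2 ^ k * lam ∈ Set.Ico ε (2 * ε) := by
  have hex : ∃ k : ℕ, ε ≤ 2 ^ k * lam := by
    obtain ⟨n, hn⟩ := pow_unbounded_of_one_lt (ε / lam) one_lt_two
    exact ⟨n, ((div_lt_iff₀ hlam).1 hn).le⟩
  refine ⟨Nat.find hex, Nat.find_spec hex, ?_⟩
  rcases h : Nat.find hex with _ | j
  · simpa using hlamε
  · have := Nat.find_min hex (show j < Nat.find hex by omega)
    rw [pow_succ]
    linarith [not_le.1 this]

lemma filter_ite_ne_zero {β : Type*} [Fintype β] [DecidableEq β] (T : Finset β) {c : ℝ}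
    (hc : c ≠ 0) : univ.filter (fun e => (if e ∈ T then c else 0) ≠ 0) = T := by
  ext e
  by_cases he : e ∈ T <;> simp [he, hc]

lemma eq_ite_of_forall_ne_zero_eq {x : Sym2 V → ℝ} {lam : ℝ} (hx : ∀ e, x e ≠ 0 → x e = lam) :
    x = fun e => if e ∈ univ.filter (fun e => x e ≠ 0) then lam else 0 := by
  ext e
  by_cases he : x e = 0
  · simp [he]
  · simp [hx e he]

lemma vnorm_ite (T : Finset (Sym2 V)) (c : ℝ) :
    vnorm (fun e => if e ∈ T then c else 0) = #T * c := by
  rw [vnorm, sum_ite_mem, univ_inter, sum_const, nsmul_eq_mul]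

lemma fracDeg_ite (T : Finset (Sym2 V)) (c : ℝ) (v : V) :
    fracDeg (fun e => if e ∈ T then c else 0) v = edgeDegree T v * c := by
  rw [fracDeg, edgeDegree, ← vnorm_ite, vnorm]
  refine sum_congr rfl fun e _ => ?_
  by_cases hv : v ∈ e <;> simp [hv]

lemma isCoarsening_self {ε δ : ℝ} {x : Sym2 V → ℝ} (hε : 0 ≤ ε) (hx : ∀ e, 0 ≤ x e)
    (hδ : ∀ e, x e < δ → x e = 0) : IsCoarsening ε δ x x := by
  have hbound : 0 ≤ ε * vnorm x + ε := by
    have : 0 ≤ vnorm x := sum_nonneg fun e _ => hx e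
    positivity
  have hdV : dV ε x x = 0 := sum_eq_zero fun v _ => by simpa using hε
  exact ⟨hx, fun _ => id, by simpa using hbound, hdV ▸ hbound, fun e he => Or.inl (hδ e he),
    fun _ _ => rfl⟩

/-- The fair-share errors, scaled by `lam`, stay below `2 ^ k * lam < 2 * ε`; in particular every
term of `dV (4 * ε)` vanishes. -/
lemma isCoarsening_ite_of_isFairShare {S T : Finset (Sym2 V)} {lam ε : ℝ} {k : ℕ}
    (hlam : 0 < lam) (hlamε : lam < ε) (hk : 2 ^ k * lam ∈ Set.Ico ε (2 * ε)) (hTS : T ⊆ S)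
    (hT : IsFairShare k S T) :
    IsCoarsening (4 * ε) ε (fun e => if e ∈ S then lam else 0)
      (fun e => if e ∈ T then 2 ^ k * lam else 0) := by
  obtain ⟨hεk, hk2ε⟩ := hk
  have hcard : |(2 : ℝ) ^ k * #T - #S| ≤ 2 ^ k - 1 := by exact_mod_cast hT.1
  have hdeg (v : V) : |(2 : ℝ) ^ k * edgeDegree T v - edgeDegree S v| ≤ 2 * (2 ^ k - 1) := by
    exact_mod_cast hT.2 v
  have hSlam : 0 ≤ 4 * ε * (#S * lam) := by have := hlam.trans hlamε; positivity
  refine ⟨fun e => ?_, fun e he => ?_, ?_, ?_, fun e _ => ?_, fun e he => ?_⟩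
  · dsimp only
    split_ifs <;> positivity
  · simp only [ne_eq, ite_eq_right_iff, Classical.not_imp] at he ⊢
    exact ⟨hTS he.1, hlam.ne'⟩
  · rw [vnorm_ite, vnorm_ite,
      show (#S : ℝ) * lam - #T * (2 ^ k * lam) = -(lam * (2 ^ k * #T - #S)) by ring,
      abs_neg, abs_mul, abs_of_pos hlam]
    nlinarith [mul_le_mul_of_nonneg_left hcard hlam.le]
  · have hdV : dV (4 * ε) (fun e => if e ∈ S then lam else 0)
        (fun e => if e ∈ T then 2 ^ k * lam else 0) = 0 := by
      refine sum_eq_zero fun v _ => max_eq_right ?_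
      rw [fracDeg_ite, fracDeg_ite,
        show (edgeDegree S v : ℝ) * lam - edgeDegree T v * (2 ^ k * lam) =
          -(lam * (2 ^ k * edgeDegree T v - edgeDegree S v)) by ring,
        abs_neg, abs_mul, abs_of_pos hlam]
      nlinarith [mul_le_mul_of_nonneg_left (hdeg v) hlam.le]
    rw [hdV, vnorm_ite]
    linarith
  · dsimp only
    split_ifs
    exacts [Or.inr ⟨hεk, hk2ε⟩, Or.inl rfl]
  · dsimp only at he
    split_ifs at he <;> linarith

theorem stmt_12_general (G : SimpleGraph V) (ε : ℝ) (hε : 0 < ε)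
    (x : Sym2 V → ℝ)
    (hxnn : ∀ e, 0 ≤ x e) (hsupp : ∀ e, x e ≠ 0 → e ∈ G.edgeSet)
    (huniform : ∃ lam : ℝ, 0 < lam ∧ ∀ e, x e ≠ 0 → x e = lam) :
    ∃ (k : ℕ) (z : Fin k → Sym2 V → ℝ),
      (∀ i, IsCoarsening (4 * ε) ε x (z i)) ∧
      (∀ i, ∀ e, z i e ≠ 0 → x e ≠ 0) ∧
      (∀ i j, i ≠ j → ∀ e, z i e ≠ 0 → z j e = 0) ∧
      ((Finset.univ.filter (fun e : Sym2 V => x e ≠ 0)).card : ℝ) / 2 ≤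
        ∑ i, ((Finset.univ.filter (fun e : Sym2 V => z i e ≠ 0)).card : ℝ) := by
  obtain ⟨lam, hlam, hunif⟩ := huniform
  set S := univ.filter fun e : Sym2 V => x e ≠ 0
  have hS : (0 : ℝ) ≤ #S := Nat.cast_nonneg _
  rcases le_or_gt ε lam with hεlam | hlamε
  · refine ⟨1, fun _ => x, fun _ => isCoarsening_self (by positivity) hxnn fun e he => ?_,
      fun _ _ => id, fun i j hij => (hij (Subsingleton.elim i j)).elim, by simp; linarith⟩
    by_contra hne
    linarith [hunif e hne]
  obtain ⟨k, hk⟩ := exists_two_pow_mul_mem_Ico (ε := ε) hlam (by linarith)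
  obtain ⟨n, P, hPS, hPdisj, hPsum, hPfair⟩ := exists_partition_isFairShare k S
    fun e he => G.not_isDiag_of_mem_edgeSet (hsupp e (mem_filter.1 he).2)
  have hz (i : Fin n) :
      IsCoarsening (4 * ε) ε x (fun e => if e ∈ P i then 2 ^ k * lam else 0) := by
    rw [eq_ite_of_forall_ne_zero_eq hunif]
    exact isCoarsening_ite_of_isFairShare hlam hlamε hk (hPS i) (hPfair i)
  refine ⟨n, fun i e => if e ∈ P i then 2 ^ k * lam else 0, hz, fun i => (hz i).2.1,
    fun i j hij e he => ?_, ?_⟩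
  · simp only [ne_eq, ite_eq_right_iff, Classical.not_imp] at he
    simp [disjoint_left.1 (hPdisj hij) he.1]
  · simp only [filter_ite_ne_zero _ (by positivity : (2 : ℝ) ^ k * lam ≠ 0)]
    rw [← Nat.cast_sum, hPsum]
    linarith

/-- For every `ε > 0` and every uniform fractional matching `x` in a graph `G = (V,E)`,
there exists a `(4ε, ε)`-split of `x`: vectors `z⁽¹⁾, …, z⁽ᵏ⁾ ∈ ℝ_{≥0}^E`, each a
`(4ε, ε)`-coarsening of `x`, with pairwise disjoint supports contained in `supp(x)`, such that
`Σ_i |supp(z⁽ⁱ⁾)| ≥ |supp(x)|/2`. -/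
theorem stmt_12 (G : SimpleGraph V) (ε : ℝ) (hε : 0 < ε)
    (x : Sym2 V → ℝ)
    (hxnn : ∀ e, 0 ≤ x e) (hsupp : ∀ e, x e ≠ 0 → e ∈ G.edgeSet)
    (hfm : ∀ v, fracDeg x v ≤ 1)
    (huniform : ∃ lam : ℝ, 0 < lam ∧ ∀ e, x e ≠ 0 → x e = lam) :
    ∃ (k : ℕ) (z : Fin k → Sym2 V → ℝ),
      (∀ i, IsCoarsening (4 * ε) ε x (z i)) ∧
      (∀ i, ∀ e, z i e ≠ 0 → x e ≠ 0) ∧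
      (∀ i j, i ≠ j → ∀ e, z i e ≠ 0 → z j e = 0) ∧
      ((Finset.univ.filter (fun e : Sym2 V => x e ≠ 0)).card : ℝ) / 2 ≤
        ∑ i, ((Finset.univ.filter (fun e : Sym2 V => z i e ≠ 0)).card : ℝ) :=
  stmt_12_general G ε hε x hxnn hsupp huniform
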